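/- arXiv:1303.2065 — 7 statements merged into one kernel-verified Lean document; each statement's English description precedes it below -/
import Mathlib

section
/- Let m be a real number, P(x,y) = y, Q(x,y) = -m^2 + (m-1)y + x^2 + xy, and L(x,y) = x + y - m. Then at every point (x,y) with L(x,y) ≠ 0, the divergence identity ∂/∂x (P(x,y)/L(x,y)) + ∂/∂y (Q(x,y)/L(x,y)) = -1/L(x,y) holds. -/
theorem HasDerivAt.affine_div_affine {𝕜 : Type*} [NontriviallyNormedField 𝕜]
    (a b c d t : 𝕜) (h : c * t + d ≠ 0) :
    HasDerivAt (fun s => (a * s + b) / (c * s + d)) ((a * d - b * c) / (c * t + d) ^ 2) t := by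
  have hnum : HasDerivAt (fun s => a * s + b) a t := by
    simpa using ((hasDerivAt_id t).const_mul a).add_const b
  have hden : HasDerivAt (fun s => c * s + d) c t := by
    simpa using ((hasDerivAt_id t).const_mul c).add_const d
  exact (hnum.fun_div hden h).congr_deriv (by ring)

theorem deriv_affine_div_affine {𝕜 : Type*} [NontriviallyNormedField 𝕜]
    {a b c d t : 𝕜} (h : c * t + d ≠ 0) :
    deriv (fun s => (a * s + b) / (c * s + d)) t = (a * d - b * c) / (c * t + d) ^ 2 :=
  (HasDerivAt.affine_div_affine a b c d t h).deriv

/-- For the Bogdanov–Takens system with `b = m - 1` and Dulac denominator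
`L(x,y) = x + y - m`, at every point where `L ≠ 0` one has
`∂/∂x (P/L) + ∂/∂y (Q/L) = -1/L`. -/
theorem bt_dulac_divergence (m x y : ℝ) (h : x + y - m ≠ 0) :
    deriv (fun x' : ℝ => y / (x' + y - m)) x +
      deriv (fun y' : ℝ =>
        (-m ^ 2 + (m - 1) * y' + x ^ 2 + x * y') / (x + y' - m)) y =
    -1 / (x + y - m) := by
  have hP : (fun x' : ℝ => y / (x' + y - m)) = fun s => (0 * s + y) / (1 * s + (y - m)) := by
    funext s; ring
  have hQ : (fun y' : ℝ => (-m ^ 2 + (m - 1) * y' + x ^ 2 + x * y') / (x + y' - m)) =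
      fun s => ((m - 1 + x) * s + (x ^ 2 - m ^ 2)) / (1 * s + (x - m)) := by
    funext s; ring
  have hLx : 1 * x + (y - m) = x + y - m := by ring
  have hLy : 1 * y + (x - m) = x + y - m := by ring
  rw [hP, hQ, deriv_affine_div_affine (hLx ▸ h), deriv_affine_div_affine (hLy ▸ h), hLx, hLy]
  -- the two numerators add up to `-y - (x - m) = -(x + y - m)`
  field_simp
  ring
end

section
/- Let m > 0 and b = m - 1. If x, y : ℝ → ℝ are differentiable functions satisfying x'(t) = y(t) and y'(t) = -m^2 + (m-1)·y(t) + x(t)^2 + x(t)·y(t) for all t, and if (x,y) is periodic with some period T > 0, then (x,y) is constant. In other words, the Bogdanov–Takens system with b = m - 1 has no nonconstant periodic solutions (hence no limit cycles). -/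
/-!
Along a solution, `N = y + x - m` satisfies the linear equation `N' = (x + m) N`, so the line
`N = 0` is invariant and a solution either stays on it or never meets it. On the line,
`x' = m - x`, so `(x - m)²` decreases strictly unless `x = m`. Off the line,
`F = y - (m - 1) x - x² / 2 + 2 m log N` has `F' = (x + m)²`. A periodic function with a
derivative of constant sign has zero derivative, hence `x` is constant, and then `y = x' = 0`.
-/

open Real Function

theorem Function.Periodic.hasDerivAt_eq_zero_of_nonneg {f f' : ℝ → ℝ} {T : ℝ} (hT : 0 < T)
    (hf : Periodic f T) (hd : ∀ t, HasDerivAt f (f' t) t) (hnn : ∀ t, 0 ≤ f' t) (t : ℝ) :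
    f' t = 0 := by
  have hmono : Monotone f :=
    monotone_of_deriv_nonneg (fun s => (hd s).differentiableAt)
      (fun s => (hd s).deriv ▸ hnn s)
  have hmin : IsLocalMin f t := by
    filter_upwards [Ioi_mem_nhds (show t - T < t by linarith)] with s hs
    calc f t = f (t - T) := (hf.sub_eq t).symm
      _ ≤ f s := hmono (le_of_lt hs)
  exact hmin.hasDerivAt_eq_zero (hd t)

theorem mul_exp_neg_eq_of_hasDerivAt_mul {N P a : ℝ → ℝ}
    (hN : ∀ t, HasDerivAt N (a t * N t) t) (hP : ∀ t, HasDerivAt P (a t) t) (t s : ℝ) :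
    N t * exp (-P t) = N s * exp (-P s) := by
  have hd : ∀ u, HasDerivAt (fun u => N u * exp (-P u)) 0 u := fun u =>
    ((hN u).mul (hP u).neg.exp).congr_deriv (by ring)
  exact is_const_of_deriv_eq_zero (fun u => (hd u).differentiableAt) (fun u => (hd u).deriv) t s

theorem forall_eq_zero_or_forall_ne_zero_of_hasDerivAt_mul {N a : ℝ → ℝ} (ha : Continuous a)
    (hN : ∀ t, HasDerivAt N (a t * N t) t) : (∀ t, N t = 0) ∨ ∀ t, N t ≠ 0 := by
  have hP : ∀ t, HasDerivAt (fun s => ∫ u in (0 : ℝ)..s, a u) (a t) t := fun t =>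
    (ha.integral_hasStrictDerivAt 0 t).hasDerivAt
  by_contra! ⟨⟨t, ht⟩, s, hs⟩
  have := mul_exp_neg_eq_of_hasDerivAt_mul hN hP t s
  rw [hs, zero_mul, mul_eq_zero] at this
  exact this.elim ht (exp_ne_zero _)

namespace BogdanovTakens

variable {m : ℝ} {x y : ℝ → ℝ} (hxd : ∀ t, HasDerivAt x (y t) t)
  (hyd : ∀ t, HasDerivAt y (-m ^ 2 + (m - 1) * y t + x t ^ 2 + x t * y t) t)
include hxd

theorem hasDerivAt_neg_sub_sq_of_invariantLine (hN : ∀ t, y t + x t - m = 0) (t : ℝ) :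
    HasDerivAt (fun t => -(x t - m) ^ 2) (2 * (x t - m) ^ 2) t := by
  have hy : y t = m - x t := by linarith [hN t]
  exact (((hxd t).sub_const m).pow 2).neg.congr_deriv (by rw [hy]; ring)

include hyd

theorem hasDerivAt_invariantLine (t : ℝ) :
    HasDerivAt (fun t => y t + x t - m) ((x t + m) * (y t + x t - m)) t :=
  (((hyd t).add (hxd t)).sub_const m).congr_deriv (by ring)

theorem hasDerivAt_lyapunov (hN : ∀ t, y t + x t - m ≠ 0) (t : ℝ) :
    HasDerivAt (fun t => y t - (m - 1) * x t - x t ^ 2 / 2 + 2 * m * log (y t + x t - m))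
      ((x t + m) ^ 2) t := by
  have hlog := (hasDerivAt_invariantLine hxd hyd t).log (hN t)
  rw [mul_div_assoc, div_self (hN t), mul_one] at hlog
  refine ((((hyd t).sub ((hxd t).const_mul (m - 1))).sub (((hxd t).pow 2).div_const 2)).add
    (hlog.const_mul (2 * m))).congr_deriv ?_
  push_cast
  ring

end BogdanovTakens

open BogdanovTakens in
theorem bt_no_periodic_orbit_general (m : ℝ) (x y : ℝ → ℝ)
    (hx : Differentiable ℝ x) (hy : Differentiable ℝ y)
    (hx' : ∀ t, deriv x t = y t)
    (hy' : ∀ t, deriv y t = -m ^ 2 + (m - 1) * y t + (x t) ^ 2 + x t * y t)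
    (T : ℝ) (hT : 0 < T)
    (hper : ∀ t, x (t + T) = x t ∧ y (t + T) = y t) :
    ∀ t, x t = x 0 ∧ y t = y 0 := by
  have hxd : ∀ t, HasDerivAt x (y t) t := fun t => hx' t ▸ (hx t).hasDerivAt
  have hyd : ∀ t, HasDerivAt y (-m ^ 2 + (m - 1) * y t + x t ^ 2 + x t * y t) t :=
    fun t => hy' t ▸ (hy t).hasDerivAt
  have hxp : Periodic x T := fun t => (hper t).1
  have hyp : Periodic y T := fun t => (hper t).2
  obtain ⟨c, hc⟩ : ∃ c, ∀ t, x t = c := by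
    rcases forall_eq_zero_or_forall_ne_zero_of_hasDerivAt_mul (hx.continuous.add continuous_const)
      (hasDerivAt_invariantLine hxd hyd) with hN | hN
    · refine ⟨m, fun t => ?_⟩
      have := Periodic.hasDerivAt_eq_zero_of_nonneg hT (fun t => by simp only [hxp t])
        (hasDerivAt_neg_sub_sq_of_invariantLine hxd hN) (fun t => by positivity) t
      nlinarith
    · refine ⟨-m, fun t => ?_⟩
      have := Periodic.hasDerivAt_eq_zero_of_nonneg hT
        (fun t => by simp only [hxp t, hyp t]) (hasDerivAt_lyapunov hxd hyd hN)
        (fun t => by positivity) t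
      nlinarith
  have hy0 (t : ℝ) : y t = 0 := by
    rw [← hx' t, funext hc, deriv_const]
  exact fun t => ⟨(hc t).trans (hc 0).symm, (hy0 t).trans (hy0 0).symm⟩

/-- The Bogdanov–Takens system with `b = m - 1` (and `m > 0`) has no nonconstant
periodic solutions: any periodic solution is constant. -/
theorem bt_no_periodic_orbit (m : ℝ) (hm : 0 < m) (x y : ℝ → ℝ)
    (hx : Differentiable ℝ x) (hy : Differentiable ℝ y)
    (hx' : ∀ t, deriv x t = y t)
    (hy' : ∀ t, deriv y t = -m ^ 2 + (m - 1) * y t + (x t) ^ 2 + x t * y t)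
    (T : ℝ) (hT : 0 < T)
    (hper : ∀ t, x (t + T) = x t ∧ y (t + T) = y t) :
    ∀ t, x t = x 0 ∧ y t = y 0 :=
  bt_no_periodic_orbit_general m x y hx hy hx' hy' T hT hper
end

section
/- For every real α > 0, the polynomial q(m) = 8m^7 + (16α+12)m^6 + (24α+6)m^5 + (48α^2 - 12α + 1)m^4 - 8α(3α+1)m^3 + 24α^2(2α+1)m^2 - 32α^3 m + 16α^4 satisfies q(m) > 0 for all m ≥ 0; in particular q has no positive real roots. -/
/-- For every `α > 0`, the polynomial
`q(m) = 8m^7 + (16α+12)m^6 + (24α+6)m^5 + (48α^2-12α+1)m^4 - 8α(3α+1)m^3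
 + 24α^2(2α+1)m^2 - 32α^3 m + 16α^4` is positive for all `m ≥ 0`;
in particular it has no positive real roots. -/
theorem q_positive (α : ℝ) (hα : 0 < α) (m : ℝ) (hm : 0 ≤ m) :
    0 < 8 * m ^ 7 + (16 * α + 12) * m ^ 6 + (24 * α + 6) * m ^ 5 +
      (48 * α ^ 2 - 12 * α + 1) * m ^ 4 - 8 * α * (3 * α + 1) * m ^ 3 +
      24 * α ^ 2 * (2 * α + 1) * m ^ 2 - 32 * α ^ 3 * m + 16 * α ^ 4 := by
  -- Key identity:
  -- q = (m-2α)^4 + 6m^2(2α+m)(2α-m)^2 + 8m^7 + (16α+12)m^6 + 24αm^5 + 48α^2m^4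
  have h2 : 0 ≤ 6 * m ^ 2 * (2 * α + m) * (2 * α - m) ^ 2 := by
    have : (0:ℝ) ≤ 2 * α + m := by linarith
    positivity
  have h3 : 0 < 48 * α ^ 2 * m ^ 4 + (m - 2 * α) ^ 4 := by
    rcases eq_or_ne m (2 * α) with h | h
    · have h0 : (m - 2 * α) ^ 4 = 0 := by rw [h]; ring
      have : 0 < 48 * α ^ 2 * m ^ 4 := by rw [h]; nlinarith [pow_pos hα 6]
      linarith
    · have hne : m - 2 * α ≠ 0 := sub_ne_zero.2 h
      have h1 : 0 < (m - 2 * α) ^ 2 :=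
        lt_of_le_of_ne (sq_nonneg _) (Ne.symm (pow_ne_zero 2 hne))
      nlinarith [mul_pos h1 h1, sq_nonneg (α * m ^ 2)]
  have h4 : 0 ≤ 8 * m ^ 7 := by positivity
  have h5 : 0 ≤ (16 * α + 12) * m ^ 6 := by positivity
  have h6 : 0 ≤ 24 * α * m ^ 5 := by positivity
  nlinarith [h2, h3, h4, h5, h6]
end

section
/- Let α > 0 and m > 0 be real and set b = m - 1 + 2α/m. Then the point (m,b) does not lie on the algebraic curve -4m^5 - 12m^4 b - 8m^3 b^2 + 8m^2 b^3 + 12 m b^4 + 4 b^5 - 60 m^4 - 48 m^3 b + 88 m^2 b^2 + 80 m b^3 + 4 b^4 + (-192 - 16α) m^3 + (384 - 48α) m^2 b + (64 - 48α) m b^2 - 16α b^3 + (256 - 160α) m^2 - 192α m b - 32α b^2 - 256α m + 64α^2 = 0; that is, the left-hand side is nonzero at (m, m - 1 + 2α/m). -/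
lemma Q2_pos (m a : ℝ) (hm : 0 < m) (ha : 0 < a) :
    0 < 16*a^4 - 32*m*a^3 + 24*m^2*a^2 + 48*m^2*a^3 - 8*m^3*a - 24*m^3*a^2 + m^4 - 12*m^4*a + 48*m^4*a^2 + 6*m^5 + 24*m^5*a + 12*m^6 + 16*m^6*a + 8*m^7 := by
  nlinarith [sq_nonneg (m-2*a), sq_nonneg ((m-2*a)^2), sq_nonneg (m-4*a), mul_nonneg (mul_nonneg (mul_pos hm hm).le ha.le) (sq_nonneg (m-4*a)), mul_nonneg (mul_nonneg (mul_pos hm hm).le (mul_pos hm hm).le) (sq_nonneg (4*a-1)), pow_pos hm 4, pow_pos hm 5, pow_pos hm 7, mul_pos hm ha, mul_nonneg (pow_pos hm 4).le (sq_nonneg (8*a-1)), mul_nonneg (pow_pos hm 5).le ha.le, mul_nonneg (pow_pos hm 6).le ha.le]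

/-- For `α > 0`, `m > 0` and `b = m - 1 + 2α/m`, the point `(m,b)` does not lie on
the degree-5 algebraic curve obtained from `B = M - 1 + α/M^2` under the
Bogdanov–Takens parameter change. -/
theorem curve_nonvanishing (α m : ℝ) (hα : 0 < α) (hm : 0 < m)
    (b : ℝ) (hb : b = m - 1 + 2 * α / m) :
    -4 * m ^ 5 - 12 * m ^ 4 * b - 8 * m ^ 3 * b ^ 2 + 8 * m ^ 2 * b ^ 3 +
      12 * m * b ^ 4 + 4 * b ^ 5 - 60 * m ^ 4 - 48 * m ^ 3 * b +
      88 * m ^ 2 * b ^ 2 + 80 * m * b ^ 3 + 4 * b ^ 4 +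
      (-192 - 16 * α) * m ^ 3 + (384 - 48 * α) * m ^ 2 * b +
      (64 - 48 * α) * m * b ^ 2 - 16 * α * b ^ 3 +
      (256 - 160 * α) * m ^ 2 - 192 * α * m * b - 32 * α * b ^ 2 -
      256 * α * m + 64 * α ^ 2 ≠ 0 := by
  have hm' : m ≠ 0 := ne_of_gt hm
  have hQ := Q2_pos m α hm hα
  have key : (-4 * m ^ 5 - 12 * m ^ 4 * b - 8 * m ^ 3 * b ^ 2 + 8 * m ^ 2 * b ^ 3 +
      12 * m * b ^ 4 + 4 * b ^ 5 - 60 * m ^ 4 - 48 * m ^ 3 * b +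
      88 * m ^ 2 * b ^ 2 + 80 * m * b ^ 3 + 4 * b ^ 4 +
      (-192 - 16 * α) * m ^ 3 + (384 - 48 * α) * m ^ 2 * b +
      (64 - 48 * α) * m * b ^ 2 - 16 * α * b ^ 3 +
      (256 - 160 * α) * m ^ 2 - 192 * α * m * b - 32 * α * b ^ 2 -
      256 * α * m + 64 * α ^ 2) * m ^ 5 =
      8 * α * (16*α^4 - 32*m*α^3 + 24*m^2*α^2 + 48*m^2*α^3 - 8*m^3*α - 24*m^3*α^2 + m^4 - 12*m^4*α + 48*m^4*α^2 + 6*m^5 + 24*m^5*α + 12*m^6 + 16*m^6*α + 8*m^7) := by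
    subst hb
    field_simp
    ring
  intro h
  rw [h, zero_mul] at key
  have : 0 < 8 * α * (16*α^4 - 32*m*α^3 + 24*m^2*α^2 + 48*m^2*α^3 - 8*m^3*α - 24*m^3*α^2 + m^4 - 12*m^4*α + 48*m^4*α^2 + 6*m^5 + 24*m^5*α + 12*m^6 + 16*m^6*α + 8*m^7) := by positivity
  linarith
end

section
/- For m > 0 let b_ℓ(m) = max(5m/7, m-1) and b_u(m) = min((5 + (37/12)m)·m/(7 + (37/12)m), m - 1 + 25/(7m)). Then for every m > 0 one has (b_u(m) - b_ℓ(m))/2 ≤ 37/122, and equality holds at m = 7/2, where b_ℓ(7/2) = 5/2 and b_u(7/2) = 379/122. -/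
/-- With `b_ℓ(m) = max(5m/7, m-1)` and
`b_u(m) = min((5+(37/12)m)m/(7+(37/12)m), m-1+25/(7m))`, for all `m > 0` one has
`(b_u(m) - b_ℓ(m))/2 ≤ 37/122`, with equality at `m = 7/2`, where
`b_ℓ(7/2) = 5/2` and `b_u(7/2) = 379/122`. -/
theorem absolute_error_bound :
    (∀ m : ℝ, 0 < m →
      (min ((5 + 37 / 12 * m) * m / (7 + 37 / 12 * m)) (m - 1 + 25 / (7 * m)) -
        max (5 * m / 7) (m - 1)) / 2 ≤ 37 / 122) ∧
    max (5 * (7 / 2 : ℝ) / 7) ((7 / 2 : ℝ) - 1) = 5 / 2 ∧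
    min ((5 + 37 / 12 * (7 / 2 : ℝ)) * (7 / 2) / (7 + 37 / 12 * (7 / 2)))
      ((7 / 2 : ℝ) - 1 + 25 / (7 * (7 / 2))) = 379 / 122 ∧
    (min ((5 + 37 / 12 * (7 / 2 : ℝ)) * (7 / 2) / (7 + 37 / 12 * (7 / 2)))
      ((7 / 2 : ℝ) - 1 + 25 / (7 * (7 / 2))) -
      max (5 * (7 / 2 : ℝ) / 7) ((7 / 2 : ℝ) - 1)) / 2 = 37 / 122 := by
  refine ⟨?_, ?_, ?_, ?_⟩
  · intro m hm
    have h7 : (0:ℝ) < 7 + 37 / 12 * m := by linarith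
    have hmin : min ((5 + 37 / 12 * m) * m / (7 + 37 / 12 * m)) (m - 1 + 25 / (7 * m)) ≤
        (5 + 37 / 12 * m) * m / (7 + 37 / 12 * m) := min_le_left _ _
    rcases le_total m (7/2) with hc | hc
    · have hmax : 5 * m / 7 ≤ max (5 * m / 7) (m - 1) := le_max_left _ _
      have key : (5 + 37 / 12 * m) * m / (7 + 37 / 12 * m) - 5 * m / 7 ≤ 37 / 61 := by
        rw [sub_le_iff_le_add, div_le_iff₀ h7]
        nlinarith [sq_nonneg (m - 7/2), mul_pos hm hm]
      linarith
    · have hmax : m - 1 ≤ max (5 * m / 7) (m - 1) := le_max_right _ _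
      have key : (5 + 37 / 12 * m) * m / (7 + 37 / 12 * m) - (m - 1) ≤ 37 / 61 := by
        rw [sub_le_iff_le_add, div_le_iff₀ h7]
        nlinarith
      linarith
  · norm_num [max_def]
  · norm_num [min_def]
  · norm_num [min_def, max_def]
end

section
/- For m > 0 let b_ℓ(m) = max(5m/7, m-1) and b_u(m) = min((5 + (37/12)m)·m/(7 + (37/12)m), m - 1 + 25/(7m)). Then for every m > 0 one has b_ℓ(m) > 0 and (b_u(m) - b_ℓ(m))/(2·b_ℓ(m)) ≤ 37/305 < 0.13, with equality at m = 7/2. -/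
/-- With `b_ℓ(m) = max(5m/7, m-1)` and
`b_u(m) = min((5+(37/12)m)m/(7+(37/12)m), m-1+25/(7m))`, for all `m > 0` one has
`b_ℓ(m) > 0` and `(b_u(m) - b_ℓ(m))/(2 b_ℓ(m)) ≤ 37/305 < 0.13`,
with equality at `m = 7/2`. -/
theorem relative_error_bound :
    (∀ m : ℝ, 0 < m →
      0 < max (5 * m / 7) (m - 1) ∧
      (min ((5 + 37 / 12 * m) * m / (7 + 37 / 12 * m)) (m - 1 + 25 / (7 * m)) -
        max (5 * m / 7) (m - 1)) / (2 * max (5 * m / 7) (m - 1)) ≤ 37 / 305) ∧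
    (37 / 305 : ℝ) < 0.13 ∧
    (min ((5 + 37 / 12 * (7 / 2 : ℝ)) * (7 / 2) / (7 + 37 / 12 * (7 / 2)))
      ((7 / 2 : ℝ) - 1 + 25 / (7 * (7 / 2))) -
      max (5 * (7 / 2 : ℝ) / 7) ((7 / 2 : ℝ) - 1)) /
      (2 * max (5 * (7 / 2 : ℝ) / 7) ((7 / 2 : ℝ) - 1)) = 37 / 305 := by
  refine ⟨fun m hm => ?_, by norm_num, ?_⟩
  · have hM : (0:ℝ) < max (5 * m / 7) (m - 1) :=
      lt_max_of_lt_left (by linarith)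
    refine ⟨hM, ?_⟩
    have hD : (0:ℝ) < 7 + 37 / 12 * m := by linarith
    rw [div_le_iff₀ (by positivity)]
    have hminA : min ((5 + 37 / 12 * m) * m / (7 + 37 / 12 * m)) (m - 1 + 25 / (7 * m)) ≤
        (5 + 37 / 12 * m) * m / (7 + 37 / 12 * m) := min_le_left _ _
    rcases le_or_gt m (7/2) with hm2 | hm2
    · -- max is 5m/7
      have hmax : max (5 * m / 7) (m - 1) = 5 * m / 7 := max_eq_left (by linarith)
      rw [hmax]
      have hA : (5 + 37 / 12 * m) * m / (7 + 37 / 12 * m) ≤ 5 * m / 7 + 37 / 305 * (2 * (5 * m / 7)) := by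
        rw [div_le_iff₀ hD]
        nlinarith [mul_pos hm hm]
      linarith
    · -- max is m - 1
      have hmax : max (5 * m / 7) (m - 1) = m - 1 := max_eq_right (by linarith)
      rw [hmax]
      have hA : (5 + 37 / 12 * m) * m / (7 + 37 / 12 * m) ≤ (m - 1) + 37 / 305 * (2 * (m - 1)) := by
        rw [div_le_iff₀ hD]
        nlinarith [mul_nonneg (by linarith : (0:ℝ) ≤ 2*m - 7) (by linarith : (0:ℝ) ≤ 1369*m + 4548)]
      linarith
  · have h1 : max (5 * (7 / 2 : ℝ) / 7) ((7 / 2 : ℝ) - 1) = 5/2 := by norm_num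
    have h2 : min ((5 + 37 / 12 * (7 / 2 : ℝ)) * (7 / 2) / (7 + 37 / 12 * (7 / 2)))
        ((7 / 2 : ℝ) - 1 + 25 / (7 * (7 / 2))) = 379/122 := by
      norm_num [min_eq_left]
    rw [h1, h2]
    norm_num
end

section
/- Fix s > 0 and set Q_s(x,y) = (7s^2/(6s+7))x + (6s^2/(6s+7))y + x^2 + xy. Define Φ⁺(x) = a₁⁺x + a₂⁺x² + a₃⁺x³ with a₁⁺ = s, a₂⁺ = (s+1)(6s+7)/(3s(4s+7)), a₃⁺ = -(s+1)(6s+7)²(5s+14)/(18s³(4s+7)²(9s+14)), and Φ⁻(x) = a₁⁻x + a₂⁻x² + a₃⁻x³ with a₁⁻ = -7s/(6s+7), a₂⁻ = (s-7)/(3s(2s+7)), a₃⁻ = (7-s)(6s+7)²(s+2)/(18s³(2s+7)²(3s+14)). Then for both choices of sign, the polynomial (in x) given by Φ'(x)·Φ(x) - Q_s(x, Φ(x)) has vanishing coefficients in degrees 1, 2 and 3; i.e., Φ'(x)Φ(x) - Q_s(x,Φ(x)) = O(x⁴) as x → 0. -/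
open Polynomial

lemma separatrix_coeff_helper (a b c q1 q2 : ℝ) :
    ((derivative (C a * X + C b * X ^ 2 + C c * X ^ 3) : ℝ[X]) * (C a * X + C b * X ^ 2 + C c * X ^ 3)
      - (C q1 * X + C q2 * (C a * X + C b * X ^ 2 + C c * X ^ 3) + X ^ 2
        + X * (C a * X + C b * X ^ 2 + C c * X ^ 3)))
    = (C (a^2 - q1 - q2*a) * X + C (3*a*b - q2*b - 1 - a) * X^2
      + C (4*a*c + 2*b^2 - q2*c - b) * X^3 + C (5*b*c - c) * X^4
      + C (3*c^2) * X^5 : ℝ[X]) := by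
  simp only [derivative_add, derivative_mul, derivative_C, derivative_X, derivative_X_pow,
    map_sub, map_mul, map_add, map_pow, map_one, map_ofNat, map_natCast, Nat.cast_ofNat]
  ring

/-- For `s > 0`, the third-order Taylor polynomials `Φ⁺`, `Φ⁻` of the unstable
and stable separatrices of the saddle at the origin of
`x' = y`, `y' = Q_s(x,y) = (7s²/(6s+7))x + (6s²/(6s+7))y + x² + xy` satisfy the
separatrix equation `Φ'·Φ = Q_s(x,Φ)` up to order three: the coefficients of
degrees 1, 2 and 3 of `Φ'·Φ - Q_s(X,Φ)` vanish. -/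
theorem separatrix_taylor_matching (s : ℝ) (hs : 0 < s)
    (Φp Φm : ℝ[X])
    (hΦp : Φp = C s * X
      + C ((s + 1) * (6 * s + 7) / (3 * s * (4 * s + 7))) * X ^ 2
      + C (-((s + 1) * (6 * s + 7) ^ 2 * (5 * s + 14)) /
          (18 * s ^ 3 * (4 * s + 7) ^ 2 * (9 * s + 14))) * X ^ 3)
    (hΦm : Φm = C (-7 * s / (6 * s + 7)) * X
      + C ((s - 7) / (3 * s * (2 * s + 7))) * X ^ 2
      + C ((7 - s) * (6 * s + 7) ^ 2 * (s + 2) /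
          (18 * s ^ 3 * (2 * s + 7) ^ 2 * (3 * s + 14))) * X ^ 3) :
    (∀ k ∈ ({1, 2, 3} : Finset ℕ),
      (derivative Φp * Φp -
        (C (7 * s ^ 2 / (6 * s + 7)) * X + C (6 * s ^ 2 / (6 * s + 7)) * Φp +
          X ^ 2 + X * Φp)).coeff k = 0) ∧
    (∀ k ∈ ({1, 2, 3} : Finset ℕ),
      (derivative Φm * Φm -
        (C (7 * s ^ 2 / (6 * s + 7)) * X + C (6 * s ^ 2 / (6 * s + 7)) * Φm +
          X ^ 2 + X * Φm)).coeff k = 0) := by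
  have h0 : s ≠ 0 := ne_of_gt hs
  have h1 : (6 : ℝ) * s + 7 ≠ 0 := by positivity
  have h2 : (4 : ℝ) * s + 7 ≠ 0 := by positivity
  have h3 : (9 : ℝ) * s + 14 ≠ 0 := by positivity
  have h4 : (2 : ℝ) * s + 7 ≠ 0 := by positivity
  have h5 : (3 : ℝ) * s + 14 ≠ 0 := by positivity
  subst hΦp hΦm
  rw [separatrix_coeff_helper, separatrix_coeff_helper]
  constructor <;> intro k hk <;> fin_cases hk <;>
    simp only [coeff_add, coeff_C_mul, coeff_X_pow, coeff_X] <;>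
    norm_num <;> field_simp <;> ring
end
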